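/- For every k ≥ 3, with A_k = S_{k-2} and B_k = Â_k, it holds that A_k = A_{k-1} B_{k-1} and B_k = A_{k-1} A_{k-1}. -/

import Mathlib

/-- The morphism φ: a ↦ ab, b ↦ aa, with `false = a`, `true = b`. -/
def pdPhi (c : Bool) : List Bool := if c then [false, false] else [false, true]

/-- The k-th period-doubling sequence. -/
def pd : ℕ → List Bool
  | 0 => [false]
  | k + 1 => (pd k).flatMap pdPhi

/-- `hat w` : `w` with its last character flipped. -/
def hat (w : List Bool) : List Bool := w.dropLast ++ (w.getLast?.map Bool.not).toList

/-!
The images `φ(a) = ab` and `φ(b) = aa` differ only in their last letter, so `φ` commutes with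
flipping the last letter: `φ(ŵ) = (φ w)^`. Inductively, `S_{n+2} = φ(S_n Ŝ_n) = S_{n+1} Ŝ_{n+1}`,
and flipping the last letter of `S_{n+1} = S_n Ŝ_n` gives `Ŝ_{n+1} = S_n S_n`.
-/

@[simp]
lemma hat_append_singleton (u : List Bool) (c : Bool) : hat (u ++ [c]) = u ++ [!c] := by
  simp [hat]

lemma hat_append {v : List Bool} (u : List Bool) (hv : v ≠ []) : hat (u ++ v) = u ++ hat v := by
  obtain ⟨v, c, rfl⟩ := (List.eq_nil_or_concat' _).resolve_left hv
  simp [← List.append_assoc]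

lemma hat_hat {w : List Bool} (hw : w ≠ []) : hat (hat w) = w := by
  obtain ⟨u, c, rfl⟩ := (List.eq_nil_or_concat' _).resolve_left hw
  simp

lemma hat_ne_nil {w : List Bool} (hw : w ≠ []) : hat w ≠ [] := by
  obtain ⟨u, c, rfl⟩ := (List.eq_nil_or_concat' _).resolve_left hw
  simp

lemma pdPhi_not (c : Bool) : pdPhi (!c) = hat (pdPhi c) := by
  cases c <;> rfl

lemma pdPhi_ne_nil (c : Bool) : pdPhi c ≠ [] := by
  cases c <;> simp [pdPhi]

lemma flatMap_pdPhi_hat {w : List Bool} (hw : w ≠ []) :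
    (hat w).flatMap pdPhi = hat (w.flatMap pdPhi) := by
  obtain ⟨u, c, rfl⟩ := (List.eq_nil_or_concat' _).resolve_left hw
  simp [hat_append _ (pdPhi_ne_nil c), pdPhi_not]

lemma pd_ne_nil (n : ℕ) : pd n ≠ [] := by
  induction n with
  | zero => simp [pd]
  | succ n ih =>
    obtain ⟨c, hc⟩ := List.exists_mem_of_ne_nil _ ih
    rw [pd, Ne, List.flatMap_eq_nil_iff]
    exact fun h => pdPhi_ne_nil c (h c hc)

lemma pd_succ (n : ℕ) : pd (n + 1) = pd n ++ hat (pd n) := by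
  induction n with
  | zero => rfl
  | succ n ih =>
    calc pd (n + 2) = (pd n).flatMap pdPhi ++ (hat (pd n)).flatMap pdPhi := by
          rw [pd, ih, List.flatMap_append]
      _ = pd (n + 1) ++ hat (pd (n + 1)) := by
          rw [flatMap_pdPhi_hat (pd_ne_nil n)]; rfl

lemma hat_pd_succ (n : ℕ) : hat (pd (n + 1)) = pd n ++ pd n := by
  rw [pd_succ, hat_append _ (hat_ne_nil (pd_ne_nil n)), hat_hat (pd_ne_nil n)]

theorem pd_AB_recurrence (k : ℕ) (hk : 3 ≤ k) :
    pd (k - 2) = pd (k - 3) ++ hat (pd (k - 3)) ∧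
    hat (pd (k - 2)) = pd (k - 3) ++ pd (k - 3) := by
  obtain ⟨n, rfl⟩ : ∃ n, k = n + 3 := ⟨k - 3, by omega⟩
  exact ⟨pd_succ n, hat_pd_succ n⟩
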